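/- If Δ is an ideal hyperbolic 3-simplex with one dihedral angle α ≥ π/2, then vol(Δ) ≤ G, where G is Catalan's constant; the bound is attained by the ideal simplex with angles (π/2, π/4, π/4). -/

import Mathlib

/-!
Since `L'(θ) = -log (2 sin θ)` is decreasing on `(0, π/2)`, `L` is concave there, so
`L β + L γ ≤ 2 L ((π - α) / 2)`. Using `sin α = 2 sin (α/2) cos (α/2)`, the function
`α ↦ L α + 2 L ((π - α) / 2)` has derivative `-log (2 sin (α/2)) ≤ 0` for `α ≥ π/3`, so on
`[π/2, π]` it is largest at `α = π/2`. Finally `L (π/2) = 0` by the classical value of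
`∫₀^{π/2} log sin`, while `L (π/2) - 2 L (π/4) = ∫₀^{π/4} log tan = ∫₀¹ log x / (1 + x²) = -G`,
the last step by expanding `1 / (1 + x²)` as a geometric series.
-/

open Real
noncomputable section

/-- The Lobachevsky function `L(θ) = -∫₀^θ log |2 sin u| du`. -/
def lobachevsky (θ : ℝ) : ℝ := -∫ u in (0:ℝ)..θ, log |2 * sin u|

/-- Catalan's constant `G = Σ_{k≥0} (-1)^k/(2k+1)²`. -/
def catalanConst : ℝ := ∑' k : ℕ, (-1) ^ k / (2 * (k : ℝ) + 1) ^ 2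

open Set MeasureTheory

theorem intervalIntegrable_log_abs_two_mul_sin (a b : ℝ) :
    IntervalIntegrable (fun u => log |2 * sin u|) volume a b :=
  (analyticOnNhd_const.mul analyticOnNhd_sin).meromorphicOn.intervalIntegrable_log_norm

@[fun_prop]
theorem continuous_lobachevsky : Continuous lobachevsky :=
  (intervalIntegral.continuous_primitive intervalIntegrable_log_abs_two_mul_sin 0).neg

theorem hasDerivAt_lobachevsky {θ : ℝ} (hθ : sin θ ≠ 0) :
    HasDerivAt lobachevsky (-log |2 * sin θ|) θ := by
  have hcont : ContinuousAt (fun u => log |2 * sin u|) θ :=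
    (continuous_const.mul continuous_sin).abs.continuousAt.log (by simpa using hθ)
  have hmeas : Measurable fun u => log |2 * sin u| := by fun_prop
  exact (intervalIntegral.integral_hasDerivAt_right (intervalIntegrable_log_abs_two_mul_sin 0 θ)
    hmeas.stronglyMeasurable.stronglyMeasurableAtFilter hcont).neg

theorem concaveOn_lobachevsky : ConcaveOn ℝ (Icc 0 (π / 2)) lobachevsky := by
  have hsin : ∀ x ∈ Ioo 0 (π / 2), 0 < sin x := fun x hx =>
    sin_pos_of_pos_of_lt_pi hx.1 (hx.2.trans (by linarith [pi_pos]))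
  have hderiv : ∀ x ∈ Ioo 0 (π / 2), HasDerivAt lobachevsky (-log |2 * sin x|) x :=
    fun x hx => hasDerivAt_lobachevsky (hsin x hx).ne'
  rw [← interior_Icc] at hsin hderiv
  refine AntitoneOn.concaveOn_of_deriv (convex_Icc _ _) continuous_lobachevsky.continuousOn
    (fun x hx => (hderiv x hx).differentiableAt.differentiableWithinAt) ?_
  intro x hx y hy hxy
  rw [(hderiv x hx).deriv, (hderiv y hy).deriv, neg_le_neg_iff]
  have hsx := hsin x hx
  rw [interior_Icc] at hx hy
  have hxy' : sin x ≤ sin y :=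
    sin_le_sin_of_le_of_le_pi_div_two (by linarith [hx.1, pi_pos]) hy.2.le hxy
  rw [abs_of_pos (by positivity), abs_of_pos (by linarith)]
  exact log_le_log (by positivity) (by linarith)

theorem hasDerivAt_lobachevsky_add_two_mul_lobachevsky_half {α : ℝ} (h0 : 0 < α) (hπ : α < π) :
    HasDerivAt (fun α => lobachevsky α + 2 * lobachevsky ((π - α) / 2))
      (-log (2 * sin (α / 2))) α := by
  have hs : 0 < sin (α / 2) := sin_pos_of_pos_of_lt_pi (by linarith) (by linarith)
  have hc : 0 < cos (α / 2) := cos_pos_of_mem_Ioo ⟨by linarith, by linarith⟩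
  have hhalf : sin ((π - α) / 2) = cos (α / 2) := by
    rw [← sin_pi_div_two_sub]; ring_nf
  have hdouble : sin α = 2 * sin (α / 2) * cos (α / 2) := by
    rw [← sin_two_mul]; ring_nf
  have hinner : HasDerivAt (fun α : ℝ => (π - α) / 2) (-1 / 2) α :=
    ((hasDerivAt_id α).const_sub π).div_const 2
  have h := (hasDerivAt_lobachevsky (by rw [hdouble]; positivity)).add
    (((hasDerivAt_lobachevsky (by rw [hhalf]; positivity)).comp α hinner).const_mul 2)
  refine h.congr_deriv ?_
  rw [hhalf, hdouble, abs_of_pos (by positivity), abs_of_pos (by positivity),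
    show 2 * (2 * sin (α / 2) * cos (α / 2)) = (2 * sin (α / 2)) * (2 * cos (α / 2)) by ring,
    log_mul (by positivity) (by positivity)]
  ring

theorem antitoneOn_lobachevsky_add_two_mul_lobachevsky_half :
    AntitoneOn (fun α => lobachevsky α + 2 * lobachevsky ((π - α) / 2)) (Icc (π / 3) π) := by
  refine antitoneOn_of_hasDerivWithinAt_nonpos (f' := fun α => -log (2 * sin (α / 2)))
    (convex_Icc _ _) (by fun_prop) (fun α hα => ?_) (fun α hα => ?_)
  all_goals rw [interior_Icc] at hα
  · exact (hasDerivAt_lobachevsky_add_two_mul_lobachevsky_half (by linarith [hα.1, pi_pos])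
      hα.2).hasDerivWithinAt
  · have h : sin (π / 6) ≤ sin (α / 2) := sin_le_sin_of_le_of_le_pi_div_two
      (by linarith [pi_pos]) (by linarith [hα.2]) (by linarith [hα.1])
    rw [sin_pi_div_six] at h
    linarith [log_nonneg (by linarith : (1:ℝ) ≤ 2 * sin (α / 2))]

theorem lobachevsky_pi_div_two : lobachevsky (π / 2) = 0 := by
  have hsplit : ∫ u in (0:ℝ)..π / 2, log |2 * sin u| =
      ∫ u in (0:ℝ)..π / 2, (log 2 + log (sin u)) := by
    refine intervalIntegral.integral_congr_ae (Filter.Eventually.of_forall fun u hu => ?_)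
    rw [uIoc_of_le (by positivity)] at hu
    have : 0 < sin u := sin_pos_of_pos_of_lt_pi hu.1 (by linarith [hu.2, pi_pos])
    rw [abs_of_pos (by positivity), log_mul two_ne_zero this.ne']
  rw [lobachevsky, hsplit, intervalIntegral.integral_add intervalIntegrable_const
    (by exact intervalIntegrable_log_sin), integral_log_sin_zero_pi_div_two,
    intervalIntegral.integral_const, smul_eq_mul]
  ring

theorem integral_log_tan_eq_lobachevsky {θ : ℝ} (h0 : 0 ≤ θ) (hθ : θ < π / 2) :
    ∫ u in (0:ℝ)..θ, log (tan u) =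
      lobachevsky (π / 2) - lobachevsky θ - lobachevsky (π / 2 - θ) := by
  have hcos : ∫ u in (0:ℝ)..θ, log |2 * cos u| = ∫ u in (π / 2 - θ)..π / 2, log |2 * sin u| := by
    simpa [sin_pi_div_two_sub] using
      intervalIntegral.integral_comp_sub_left (fun u => log |2 * sin u|) (π / 2) (a := 0) (b := θ)
  have hcos_int : IntervalIntegrable (fun u => log |2 * cos u|) volume 0 θ := by
    simpa [sin_pi_div_two_sub] using
      (intervalIntegrable_log_abs_two_mul_sin (π / 2 - 0) (π / 2 - θ)).comp_sub_left (π / 2)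
  have htan : ∫ u in (0:ℝ)..θ, log (tan u) =
      ∫ u in (0:ℝ)..θ, (log |2 * sin u| - log |2 * cos u|) := by
    refine intervalIntegral.integral_congr_ae (Filter.Eventually.of_forall fun u hu => ?_)
    rw [uIoc_of_le h0] at hu
    have hs : 0 < sin u := sin_pos_of_pos_of_lt_pi hu.1 (by linarith [hu.2, pi_pos])
    have hc : 0 < cos u := cos_pos_of_mem_Ioo ⟨by linarith [hu.1, pi_pos], by linarith [hu.2]⟩
    rw [abs_of_pos (by positivity), abs_of_pos (by positivity), tan_eq_sin_div_cos,
      log_div hs.ne' hc.ne', log_mul two_ne_zero hs.ne', log_mul two_ne_zero hc.ne']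
    ring
  rw [htan, intervalIntegral.integral_sub (intervalIntegrable_log_abs_two_mul_sin 0 θ) hcos_int,
    hcos, lobachevsky, lobachevsky, lobachevsky,
    ← intervalIntegral.integral_add_adjacent_intervals
      (intervalIntegrable_log_abs_two_mul_sin 0 (π / 2 - θ))
      (intervalIntegrable_log_abs_two_mul_sin _ (π / 2))]
  ring

theorem integral_log_tan_eq_integral_log_div_one_add_sq :
    ∫ u in (0:ℝ)..π / 4, log (tan u) = ∫ x in (0:ℝ)..1, log x / (1 + x ^ 2) := by
  have himage : arctan '' Icc 0 1 = Icc 0 (π / 4) := by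
    rw [continuous_arctan.image_Icc_of_strictMono arctan_strictMono, arctan_zero, arctan_one]
  have h := integral_image_eq_integral_abs_deriv_smul (s := Icc 0 1) measurableSet_Icc
    (fun x _ => (hasDerivAt_arctan x).hasDerivWithinAt) arctan_strictMono.injective.injOn
    (fun u => log (tan u))
  rw [himage] at h
  rw [intervalIntegral.integral_of_le (by positivity), intervalIntegral.integral_of_le zero_le_one,
    ← integral_Icc_eq_integral_Ioc, ← integral_Icc_eq_integral_Ioc, h]
  refine setIntegral_congr_fun measurableSet_Icc fun x _ => ?_
  rw [tan_arctan, abs_of_pos (by positivity), smul_eq_mul]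
  ring

theorem intervalIntegrable_pow_mul_log (n : ℕ) (a b : ℝ) :
    IntervalIntegrable (fun x => x ^ n * log x) volume a b :=
  intervalIntegral.intervalIntegrable_log'.continuousOn_mul (continuous_pow n).continuousOn

theorem integral_pow_mul_log (n : ℕ) : ∫ x in (0:ℝ)..1, x ^ n * log x = -1 / (n + 1) ^ 2 := by
  have hn : (n:ℝ) + 1 ≠ 0 := by positivity
  have hcont : Continuous fun x : ℝ => x ^ (n + 1) * log x :=
    ((continuous_pow n).mul continuous_mul_log).congr fun x => by simp only [Pi.mul_apply]; ring
  have hderiv : ∀ x ∈ Ioo (0:ℝ) 1, HasDerivAt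
      (fun x => x ^ (n + 1) * log x / (n + 1) - x ^ (n + 1) / (n + 1) ^ 2) (x ^ n * log x) x := by
    intro x hx
    have hx0 : x ≠ 0 := hx.1.ne'
    have h := (((hasDerivAt_pow (n + 1) x).mul (hasDerivAt_log hx0)).div_const ((n:ℝ) + 1)).sub
      ((hasDerivAt_pow (n + 1) x).div_const (((n:ℝ) + 1) ^ 2))
    refine h.congr_deriv ?_
    push_cast
    field_simp
    ring
  rw [intervalIntegral.integral_eq_sub_of_hasDerivAt_of_le zero_le_one
    ((hcont.div_const _).sub (by fun_prop)).continuousOn hderiv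
    (intervalIntegrable_pow_mul_log n 0 1)]
  simp [field]

theorem hasSum_log_div_one_add_sq {x : ℝ} (hx : x ∈ Ioo (0:ℝ) 1) :
    HasSum (fun n : ℕ => (-1) ^ n * (x ^ (2 * n) * log x)) (log x / (1 + x ^ 2)) := by
  have hgeom := (hasSum_geometric_of_abs_lt_one (r := -x ^ 2) (by
    rw [abs_neg, abs_of_nonneg (by positivity)]; nlinarith [hx.1, hx.2])).mul_right (log x)
  have hterm : (fun n : ℕ => (-1) ^ n * (x ^ (2 * n) * log x)) =
      fun n => (-x ^ 2) ^ n * log x := by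
    ext n
    rw [neg_pow, pow_mul]
    ring
  rwa [hterm, div_eq_inv_mul, ← sub_neg_eq_add]

theorem summable_one_div_two_mul_add_one_sq :
    Summable fun n : ℕ => 1 / (2 * (n:ℝ) + 1) ^ 2 := by
  have h := (Real.summable_one_div_nat_pow.mpr one_lt_two).comp_injective
    (i := fun n : ℕ => 2 * n + 1) (fun a b hab => by simp only at hab; omega)
  simpa [Function.comp_def] using h

theorem integral_log_div_one_add_sq : ∫ x in (0:ℝ)..1, log x / (1 + x ^ 2) = -catalanConst := by
  set F : ℕ → ℝ → ℝ := fun n x => (-1) ^ n * (x ^ (2 * n) * log x)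
  have hF_int : ∀ n, Integrable (F n) (volume.restrict (Ioo 0 1)) := fun n =>
    (intervalIntegrable_iff_integrableOn_Ioo_of_le zero_le_one).1
      ((intervalIntegrable_pow_mul_log (2 * n) 0 1).const_mul _)
  have hF_integral : ∀ n, ∫ x in Ioo 0 1, F n x = -((-1) ^ n / (2 * (n:ℝ) + 1) ^ 2) := by
    intro n
    rw [← integral_Ioc_eq_integral_Ioo, ← intervalIntegral.integral_of_le zero_le_one,
      intervalIntegral.integral_const_mul, integral_pow_mul_log]
    push_cast
    ring
  have hF_norm : ∀ n, ∫ x in Ioo 0 1, ‖F n x‖ = 1 / (2 * (n:ℝ) + 1) ^ 2 := by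
    intro n
    rw [setIntegral_congr_fun measurableSet_Ioo (g := fun x => -(x ^ (2 * n) * log x))
      fun x hx => ?_, ← integral_Ioc_eq_integral_Ioo, ← intervalIntegral.integral_of_le zero_le_one,
      intervalIntegral.integral_neg, integral_pow_mul_log]
    · push_cast
      ring
    · rw [norm_mul, norm_pow, norm_neg, norm_one, one_pow, one_mul, Real.norm_eq_abs,
        abs_of_nonpos (mul_nonpos_of_nonneg_of_nonpos (pow_nonneg hx.1.le _)
          (log_nonpos hx.1.le hx.2.le))]
  have h := hasSum_integral_of_summable_integral_norm hF_int
    (by simpa only [hF_norm] using summable_one_div_two_mul_add_one_sq)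
  rw [integral_congr_ae ((ae_restrict_iff' measurableSet_Ioo).2
    (Filter.Eventually.of_forall fun x hx => (hasSum_log_div_one_add_sq hx).tsum_eq))] at h
  simp only [hF_integral] at h
  have h' := h.neg
  simp only [neg_neg] at h'
  rw [intervalIntegral.integral_of_le zero_le_one, integral_Ioc_eq_integral_Ioo, catalanConst,
    h'.tsum_eq, neg_neg]

theorem lobachevsky_pi_div_four : lobachevsky (π / 4) = catalanConst / 2 := by
  have h := integral_log_tan_eq_lobachevsky (θ := π / 4) (by positivity) (by linarith [pi_pos])
  rw [integral_log_tan_eq_integral_log_div_one_add_sq, integral_log_div_one_add_sq,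
    lobachevsky_pi_div_two, show π / 2 - π / 4 = π / 4 by ring] at h
  linarith

/-- If `Δ` is a (nondegenerate) ideal hyperbolic 3-simplex with dihedral
angles `α, β, γ > 0`, `α + β + γ = π`, and one angle `α ≥ π/2`, then its volume
`vol(Δ) = L(α) + L(β) + L(γ)` (Milnor's formula) is at most Catalan's constant `G`;
the bound is attained by the ideal simplex with angles `(π/2, π/4, π/4)`. -/
theorem ideal_one_obtuse_volume_le_catalan (α β γ : ℝ)
    (hα : π / 2 ≤ α) (hβ : 0 < β) (hγ : 0 < γ) (hsum : α + β + γ = π) :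
    lobachevsky α + lobachevsky β + lobachevsky γ ≤ catalanConst ∧
      lobachevsky (π / 2) + lobachevsky (π / 4) + lobachevsky (π / 4) = catalanConst := by
  have hvalue : lobachevsky (π / 2) + 2 * lobachevsky (π / 4) = catalanConst := by
    rw [lobachevsky_pi_div_two, lobachevsky_pi_div_four]
    ring
  refine ⟨?_, by linarith⟩
  have hconcave : lobachevsky β + lobachevsky γ ≤ 2 * lobachevsky ((π - α) / 2) := by
    have h := concaveOn_lobachevsky.2 (x := β) (y := γ) ⟨hβ.le, by linarith⟩ ⟨hγ.le, by linarith⟩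
      (by norm_num : (0:ℝ) ≤ 1 / 2) (by norm_num : (0:ℝ) ≤ 1 / 2) (by norm_num)
    simp only [smul_eq_mul] at h
    rw [show 1 / 2 * β + 1 / 2 * γ = (π - α) / 2 by linarith] at h
    linarith
  have hmono : lobachevsky α + 2 * lobachevsky ((π - α) / 2) ≤
      lobachevsky (π / 2) + 2 * lobachevsky (π / 4) := by
    have h := antitoneOn_lobachevsky_add_two_mul_lobachevsky_half
      ⟨by linarith [pi_pos], by linarith [pi_pos]⟩ ⟨by linarith [pi_pos], by linarith⟩ hα
    dsimp only at h
    rwa [show (π - π / 2) / 2 = π / 4 by ring] at h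
  linarith

end
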